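/- arXiv:1812.03947 — 3 statements merged into one kernel-verified Lean document; each statement's English description precedes it below -/
import Mathlib

section
/- The number of plane rooted complete n-ary trees with k internal nodes equals the n-ary Catalan number (1/(1+(n-1)k)) * binomial(nk, k). -/
/-!
Removing the first tree of a forest of `m + 1` trees with `k + 1` internal nodes leaves either
a forest of `m` trees (if that tree is a leaf) or, after replacing it by its `n` subtrees, a
forest of `n + m` trees with `k` internal nodes. So the numbers `F(m, k)` of such forests satisfy
`F(m + 1, k + 1) = F(m, k + 1) + F(n + m, k)`, `F(m, 0) = 1` and `F(0, k + 1) = 0`, and induction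
gives the ballot-type formula `(n k + m) F(m, k) = m C(n k + m, k)`. For `m = 1` this is
`C(n k + 1, k) / (n k + 1) = C(n k, k) / (1 + (n - 1) k)`.
-/

/-- Plane rooted complete `n`-ary trees: every internal node has exactly `n` children. -/
inductive NaryTree (n : ℕ) : Type
  | leaf : NaryTree n
  | node : (Fin n → NaryTree n) → NaryTree n

/-- Number of internal nodes (including the root, if the tree is not a leaf). -/
def NaryTree.internalNodes {n : ℕ} : NaryTree n → ℕ
  | .leaf => 0
  | .node c => 1 + ∑ i, (c i).internalNodes

namespace NaryTree

variable {n : ℕ}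

lemma internalNodes_eq_zero_iff {t : NaryTree n} : t.internalNodes = 0 ↔ t = leaf := by
  cases t <;> simp [internalNodes]

def equivOption : NaryTree n ≃ Option (Fin n → NaryTree n) where
  toFun
    | leaf => none
    | node c => some c
  invFun
    | none => leaf
    | some c => node c
  left_inv t := by cases t <;> rfl
  right_inv o := by cases o <;> rfl

abbrev Forest (n m k : ℕ) : Type := {f : Fin m → NaryTree n // ∑ i, (f i).internalNodes = k}

def splitFirst (m : ℕ) :
    (Fin (m + 1) → NaryTree n) ≃ (Fin m → NaryTree n) ⊕ (Fin (n + m) → NaryTree n) :=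
  (Fin.consEquiv fun _ => NaryTree n).symm.trans <|
    (Equiv.prodCongr equivOption (Equiv.refl _)).trans <|
      optionProdEquiv.trans (Equiv.sumCongr (Equiv.refl _) (Fin.appendEquiv n m))

lemma splitFirst_cons_leaf {m : ℕ} (f : Fin m → NaryTree n) :
    splitFirst m (Fin.cons leaf f) = .inl f := rfl

lemma splitFirst_cons_node {m : ℕ} (c : Fin n → NaryTree n) (f : Fin m → NaryTree n) :
    splitFirst m (Fin.cons (node c) f) = .inr (Fin.append c f) := rfl

def forestSuccEquiv (m k : ℕ) :
    Forest n (m + 1) (k + 1) ≃ Forest n m (k + 1) ⊕ Forest n (n + m) k :=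
  ((splitFirst m).subtypeEquiv (q := Sum.elim (fun f => ∑ i, (f i).internalNodes = k + 1)
      fun g => ∑ i, (g i).internalNodes = k) fun f => by
    obtain ⟨t, f, rfl⟩ : ∃ t f', f = Fin.cons t f' := ⟨_, _, (Fin.cons_self_tail f).symm⟩
    cases t with
    | leaf => simp [splitFirst_cons_leaf, Fin.sum_univ_succ, internalNodes]
    | node c =>
      simp only [Fin.sum_univ_succ, Fin.cons_zero, internalNodes, Fin.cons_succ, Fin.sum_univ_add,
        splitFirst_cons_node, Sum.elim_inr, Fin.append_left, Fin.append_right]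
      omega).trans Equiv.subtypeSum

def forestCount (n : ℕ) : ℕ → ℕ → ℕ
  | _, 0 => 1
  | 0, _ + 1 => 0
  | m + 1, k + 1 => forestCount n m (k + 1) + forestCount n (n + m) k
termination_by m k => (k, m)

instance (m : ℕ) : Unique (Forest n m 0) where
  default := ⟨fun _ => leaf, by simp [internalNodes]⟩
  uniq f := Subtype.ext <| funext fun i =>
    internalNodes_eq_zero_iff.1 <| (Finset.sum_eq_zero_iff.1 f.2) i (Finset.mem_univ i)

instance (k : ℕ) : IsEmpty (Forest n 0 (k + 1)) :=
  ⟨fun f => by simpa using f.2⟩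

lemma enatCard_forest (m k : ℕ) : ENat.card (Forest n m k) = forestCount n m k := by
  induction m, k using forestCount.induct n with
  | case1 m => simp [forestCount]
  | case2 k => simp [forestCount]
  | case3 m k ih₁ ih₂ =>
    rw [ENat.card_congr (forestSuccEquiv m k), ENat.card_sum, ih₁, ih₂, forestCount,
      Nat.cast_add]

lemma card_forest (m k : ℕ) : Nat.card (Forest n m k) = forestCount n m k :=
  congrArg ENat.toNat (enatCard_forest m k)

theorem forestCount_mul_eq (hn : 0 < n) (m k : ℕ) :
    (n * k + m) * forestCount n m k = m * (n * k + m).choose k := by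
  induction m, k using forestCount.induct n with
  | case1 m => simp [forestCount]
  | case2 k => simp [forestCount]
  | case3 m k ih₁ ih₂ =>
    rw [show n * k + (n + m) = n * (k + 1) + m by ring] at ih₂
    rw [forestCount]
    set N := n * (k + 1) + m with hN
    have hk : k ≤ N := by nlinarith
    have hweights : m * (N - k) + (n + m) * (k + 1) = (m + 1) * N := by
      zify [hk]
      rw [hN]
      push_cast
      ring
    apply Nat.eq_of_mul_eq_mul_left (show 0 < N by rw [hN]; positivity)
    calc N * ((N + 1) * (forestCount n m (k + 1) + forestCount n (n + m) k))
        = (N + 1) * (N * forestCount n m (k + 1) + N * forestCount n (n + m) k) := by ring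
      _ = m * (N.choose (k + 1) * (N + 1)) + (n + m) * ((N + 1) * N.choose k) := by
        rw [ih₁, ih₂]
        ring
      _ = (N + 1).choose (k + 1) * (m * (N - k) + (n + m) * (k + 1)) := by
        rw [Nat.choose_mul_succ_eq, Nat.add_one_mul_choose_eq, Nat.add_sub_add_right]
        ring
      _ = N * ((m + 1) * (N + 1).choose (k + 1)) := by
        rw [hweights]
        ring

theorem forestCount_one_mul (hn : 0 < n) (k : ℕ) :
    forestCount n 1 k * (1 + (n - 1) * k) = (n * k).choose k := by
  have hcount : (n * k + 1) * forestCount n 1 k = (n * k + 1).choose k := by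
    simpa using forestCount_mul_eq hn 1 k
  have hd : 1 + (n - 1) * k = n * k + 1 - k := by
    rw [Nat.sub_one_mul]
    have := Nat.le_mul_of_pos_left k hn
    omega
  apply Nat.eq_of_mul_eq_mul_left (Nat.succ_pos (n * k))
  rw [← mul_assoc, hcount, hd, ← Nat.choose_mul_succ_eq, mul_comm]

lemma card_forest_one (k : ℕ) :
    Nat.card (Forest n 1 k) = Nat.card {t : NaryTree n // t.internalNodes = k} :=
  Nat.card_congr <| Equiv.subtypeEquiv (Equiv.funUnique (Fin 1) _) fun f => by simp

end NaryTree

/-- The number of plane rooted complete `n`-ary trees with `k` internal nodes equals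
the `n`-ary Catalan number `(1/(1+(n-1)k)) * binomial(nk, k)`. -/
theorem card_naryTree_internalNodes_eq_catalan (n k : ℕ) (hn : 2 ≤ n) :
    Nat.card {t : NaryTree n // t.internalNodes = k} =
      (n * k).choose k / (1 + (n - 1) * k) := by
  rw [← NaryTree.card_forest_one, NaryTree.card_forest,
    ← NaryTree.forestCount_one_mul (by omega : 0 < n), Nat.mul_div_cancel _ (by positivity)]
end

section
/- For n ≥ 2 and k ≥ 0, the number (1/(1+(n-1)k)) * binomial(nk, k) is a positive integer, i.e., (1+(n-1)k) divides binomial(nk, k). -/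
/-- For `n ≥ 2` and `k ≥ 0`, the `n`-ary Catalan number `(1/(1+(n-1)k)) * binomial(nk, k)`
is a positive integer, i.e. `1+(n-1)k` divides `binomial(nk, k)`. -/
theorem one_add_mul_dvd_choose (n k : ℕ) (hn : 2 ≤ n) :
    (1 + (n - 1) * k) ∣ (n * k).choose k := by
  have hsub : (n - 1) * k = n * k - k := by
    cases n with
    | zero => omega
    | succ m => simp [Nat.succ_mul]
  have hk : k ≤ n * k := Nat.le_mul_of_pos_left k (by omega)
  have h1 : (n * k + 1) * (n * k).choose k = (n * k + 1).choose (k + 1) * (k + 1) :=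
    Nat.add_one_mul_choose_eq (n * k) k
  have h2 : (n * k + 1).choose (k + 1) * (k + 1) = (n * k + 1).choose k * (n * k + 1 - k) :=
    Nat.choose_succ_right_eq (n * k + 1) k
  have h3 : n * k + 1 - k = 1 + (n - 1) * k := by omega
  have key : (n * k + 1) * (n * k).choose k = (n * k + 1).choose k * (1 + (n - 1) * k) := by
    rw [h1, h2, h3]
  have hd : (1 + (n - 1) * k) ∣ (n * k + 1) * (n * k).choose k :=
    key ▸ dvd_mul_left _ _
  have hcop : Nat.Coprime (1 + (n - 1) * k) (n * k + 1) := by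
    have h5 : n * k + 1 = (1 + (n - 1) * k) + k := by omega
    rw [h5, Nat.coprime_self_add_right,
      show 1 + (n - 1) * k = 1 + k * (n - 1) by ring,
      Nat.coprime_add_mul_left_left]
    exact Nat.coprime_one_left k
  exact (hcop.dvd_of_dvd_mul_left hd)
end

section
/- For any field F and any n ≥ 2, with respect to the signed pairing ⟨eᵢ, eⱼ⟩ = (-1)^((i+1)(n+1)) δᵢⱼ on Fⁿ, the orthogonal complement of the subspace spanned by {eᵢ − eᵢ₊₁ : 1 ≤ i ≤ n−1} is the line spanned by Σᵢ₌₁ⁿ (-1)^((i+1)(n-1)) eᵢ, provided char F does not divide n when n is odd (so that the complement is exactly one-dimensional, the pairing being nondegenerate when char F ≠ 2). -/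
private lemma negOnePow_congr {F : Type*} [Ring F] {a b : ℕ} (h : a % 2 = b % 2) :
    (-1 : F) ^ a = (-1 : F) ^ b := by
  conv_lhs => rw [← Nat.div_add_mod a 2]
  conv_rhs => rw [← Nat.div_add_mod b 2]
  rw [pow_add, pow_add, pow_mul, pow_mul, neg_one_sq, one_pow, one_pow, h]

/-- For a field `F` with `char F ≠ 2` (and `char F ∤ n` when `n` is odd) and `n ≥ 2`,
with respect to the signed pairing `⟨eᵢ, eⱼ⟩ = (-1)^((i+1)(n+1)) δᵢⱼ` on `Fⁿ`
(indices `1,…,n`; written below with 0-indexed `j`, so `i = j+1`), the orthogonal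
complement of the subspace spanned by the consecutive differences
`{eᵢ − eᵢ₊₁ : 1 ≤ i ≤ n−1}` is the line spanned by `∑ᵢ (-1)^((i+1)(n-1)) eᵢ`. -/
theorem signed_orthogonal_of_nary_relations (F : Type*) [Field F]
    (n : ℕ) (hn : 2 ≤ n) (h2 : (2 : F) ≠ 0) (hodd : Odd n → (n : F) ≠ 0) :
    {x : Fin n → F |
        ∀ v ∈ Submodule.span F
            {v : Fin n → F | ∃ (i : ℕ) (h : i + 1 < n),
              v = (Pi.single (⟨i, by omega⟩ : Fin n) (1 : F) : Fin n → F) -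
                    (Pi.single (⟨i + 1, h⟩ : Fin n) (1 : F) : Fin n → F)},
          ∑ j : Fin n, (-1 : F) ^ (((j : ℕ) + 1 + 1) * (n + 1)) * x j * v j = 0}
      = ↑(Submodule.span F
          ({fun j : Fin n => (-1 : F) ^ (((j : ℕ) + 1 + 1) * (n - 1))} :
            Set (Fin n → F))) := by
  classical
  have hN : (-1 : F) ≠ 0 := neg_ne_zero.mpr one_ne_zero
  set s : F := (-1) ^ (n + 1) with hs
  have hss : s * s = 1 := by
    rw [hs, ← pow_add]
    exact Even.neg_one_pow ⟨n + 1, rfl⟩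
  -- pairing of x with a generator
  have hgen : ∀ (x : Fin n → F) (i : ℕ) (hi : i + 1 < n),
      (∑ j : Fin n, (-1 : F) ^ (((j : ℕ) + 1 + 1) * (n + 1)) * x j *
        (((Pi.single (⟨i, by omega⟩ : Fin n) (1 : F) : Fin n → F) -
          (Pi.single (⟨i + 1, hi⟩ : Fin n) (1 : F) : Fin n → F)) j))
      = (-1 : F) ^ ((i + 1 + 1) * (n + 1)) * x ⟨i, by omega⟩
        - (-1 : F) ^ ((i + 1 + 1 + 1) * (n + 1)) * x ⟨i + 1, hi⟩ := by
    intro x i hi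
    simp only [Pi.sub_apply, Pi.single_apply, mul_sub, Finset.sum_sub_distrib,
      mul_ite, mul_one, mul_zero, Finset.sum_ite_eq', Finset.mem_univ, if_true]
  ext x
  simp only [Set.mem_setOf_eq, SetLike.mem_coe, Submodule.mem_span_singleton]
  constructor
  · intro hx
    have hrec : ∀ (i : ℕ) (hi : i + 1 < n),
        x ⟨i + 1, hi⟩ = s * x ⟨i, Nat.lt_of_succ_lt hi⟩ := by
      intro i hi
      have hv : ((Pi.single (⟨i, by omega⟩ : Fin n) (1 : F) : Fin n → F) -
          (Pi.single (⟨i + 1, hi⟩ : Fin n) (1 : F) : Fin n → F)) ∈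
          Submodule.span F
            {v : Fin n → F | ∃ (i : ℕ) (h : i + 1 < n),
              v = (Pi.single (⟨i, by omega⟩ : Fin n) (1 : F) : Fin n → F) -
                    (Pi.single (⟨i + 1, h⟩ : Fin n) (1 : F) : Fin n → F)} :=
        Submodule.subset_span ⟨i, hi, rfl⟩
      have h0 := hx _ hv
      rw [hgen x i hi] at h0
      have hA : (-1 : F) ^ ((i + 1 + 1) * (n + 1)) ≠ 0 := pow_ne_zero _ hN
      have hexp : (-1 : F) ^ ((i + 1 + 1 + 1) * (n + 1))
          = (-1 : F) ^ ((i + 1 + 1) * (n + 1)) * s := by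
        rw [hs, ← pow_add]; congr 1; ring
      rw [hexp] at h0
      have h3 : (-1 : F) ^ ((i + 1 + 1) * (n + 1)) *
          (x (⟨i, by omega⟩ : Fin n) - s * x ⟨i + 1, hi⟩) = 0 := by
        linear_combination h0
      rcases mul_eq_zero.mp h3 with h | h
      · exact absurd h hA
      · have h4 : x (⟨i, by omega⟩ : Fin n) = s * x ⟨i + 1, hi⟩ := sub_eq_zero.mp h
        have h5 : x ⟨i + 1, hi⟩ = s * x (⟨i, by omega⟩ : Fin n) := by
          rw [h4, ← mul_assoc, hss, one_mul]
        exact h5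
    have hpos : 0 < n := by omega
    have key : ∀ (m : ℕ) (hm : m < n), x ⟨m, hm⟩ = s ^ m * x ⟨0, hpos⟩ := by
      intro m
      induction m with
      | zero => intro hm; simp
      | succ k ih =>
        intro hm
        rw [hrec k hm, ih (Nat.lt_of_succ_lt hm), pow_succ]
        ring
    refine ⟨x ⟨0, hpos⟩, ?_⟩
    funext j
    have hj := key j.1 j.2
    rw [Fin.eta] at hj
    rw [Pi.smul_apply, smul_eq_mul, hj, hs, ← pow_mul]
    have hmod : ((n + 1) * (j : ℕ)) % 2 = (((j : ℕ) + 1 + 1) * (n - 1)) % 2 := by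
      have e1 : (n + 1) % 2 = (n - 1) % 2 := by omega
      have e2 : (j : ℕ) % 2 = ((j : ℕ) + 1 + 1) % 2 := by omega
      rw [Nat.mul_mod, Nat.mul_mod ((j : ℕ) + 1 + 1), e1, e2, Nat.mul_comm]
    rw [negOnePow_congr hmod]
    ring
  · rintro ⟨a, rfl⟩
    intro v hv
    induction hv using Submodule.span_induction with
    | mem v hv =>
      obtain ⟨i, hi, rfl⟩ := hv
      rw [hgen _ i hi]
      have hcw : ∀ (k : ℕ), (-1 : F) ^ ((k + 1 + 1) * (n + 1)) *
          (-1 : F) ^ ((k + 1 + 1) * (n - 1)) = 1 := by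
        intro k
        rw [← pow_add, ← Nat.mul_add]
        exact Even.neg_one_pow (Even.mul_left ⟨n, by omega⟩ _)
      simp only [Pi.smul_apply, smul_eq_mul]
      have h1 := hcw i
      have h2 := hcw (i + 1)
      linear_combination a * h1 - a * h2
    | zero => simp
    | add u v hu' hv' ihu ihv =>
      have e : ∀ j : Fin n, (-1 : F) ^ (((j : ℕ) + 1 + 1) * (n + 1)) *
          (a • fun j : Fin n => (-1 : F) ^ (((j : ℕ) + 1 + 1) * (n - 1))) j * (u + v) j
          = (-1 : F) ^ (((j : ℕ) + 1 + 1) * (n + 1)) *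
            (a • fun j : Fin n => (-1 : F) ^ (((j : ℕ) + 1 + 1) * (n - 1))) j * u j
          + (-1 : F) ^ (((j : ℕ) + 1 + 1) * (n + 1)) *
            (a • fun j : Fin n => (-1 : F) ^ (((j : ℕ) + 1 + 1) * (n - 1))) j * v j := by
        intro j; simp [Pi.add_apply]; ring
      simp only [e, Finset.sum_add_distrib, ihu, ihv, add_zero]
    | smul t v hv' ihv =>
      have e : ∀ j : Fin n, (-1 : F) ^ (((j : ℕ) + 1 + 1) * (n + 1)) *
          (a • fun j : Fin n => (-1 : F) ^ (((j : ℕ) + 1 + 1) * (n - 1))) j * (t • v) j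
          = t * ((-1 : F) ^ (((j : ℕ) + 1 + 1) * (n + 1)) *
            (a • fun j : Fin n => (-1 : F) ^ (((j : ℕ) + 1 + 1) * (n - 1))) j * v j) := by
        intro j; simp [Pi.smul_apply, smul_eq_mul]; ring
      simp only [e, ← Finset.mul_sum, ihv, mul_zero]
end
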